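/- arXiv:2509.03443 — 2 statements merged into one kernel-verified Lean document; each statement's English description precedes it below -/
import Mathlib

section
/- Let L ∈ ℝ^{N×N} be the Laplacian of a strongly connected weighted digraph, and let v ∈ ℝ^N with positive entries satisfy vᵀL = 0 and vᵀ1 = 1. Set V := diag(v) and Q := LᵀV + VL. Then Q is symmetric positive semidefinite and its kernel equals span{1_N}. -/
/-!
The row balance `vᵀL = 0` says that the weights `v i * A i j` have equal in- and out-flow at
every node. This lets the quadratic form be symmetrized into
`xᵀQx = ∑ i j, v i * A i j * (x i - x j) ^ 2`, which is nonnegative and, since `Q` is then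
positive semidefinite, vanishes exactly on the kernel of `Q`. It vanishes iff `x` is constant
along every edge, that is, by strong connectivity, iff `x` is constant.
-/

open Matrix Finset

section

variable {ι : Type*} [Fintype ι]

def weightedLaplacian {R : Type*} [Ring R] [DecidableEq ι] (A : Matrix ι ι R) : Matrix ι ι R :=
  diagonal (fun i => ∑ j, A i j) - A

theorem weightedLaplacian_mulVec_apply {R : Type*} [Ring R] [DecidableEq ι] (A : Matrix ι ι R)
    (x : ι → R) (i : ι) :
    (weightedLaplacian A *ᵥ x) i = ∑ j, A i j * (x i - x j) := by
  rw [weightedLaplacian, sub_mulVec, Pi.sub_apply, mulVec_diagonal, mulVec, dotProduct, sum_mul,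
    ← sum_sub_distrib]
  simp only [mul_sub]

theorem sum_eq_sum_of_vecMul_weightedLaplacian_eq_zero {R : Type*} [Ring R] [DecidableEq ι]
    {A : Matrix ι ι R} {v : ι → R} (hv : vecMul v (weightedLaplacian A) = 0) (i : ι) :
    ∑ j, v i * A i j = ∑ j, v j * A j i := by
  rw [weightedLaplacian, vecMul_sub, sub_eq_zero] at hv
  have h := congrFun hv i
  rwa [vecMul_diagonal, mul_sum] at h

theorem sum_mul_sq_sub_of_balanced {R : Type*} [CommRing R] {w : ι → ι → R}
    (hw : ∀ i, ∑ j, w i j = ∑ j, w j i) (x : ι → R) :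
    ∑ i, ∑ j, w i j * (x i - x j) ^ 2 = 2 * ∑ i, ∑ j, w i j * (x i * (x i - x j)) := by
  have hflow : ∑ i, ∑ j, w i j * x j ^ 2 = ∑ i, ∑ j, w i j * x i ^ 2 := by
    rw [sum_comm]
    simp only [← sum_mul, hw]
  have hterm : ∀ i j, w i j * (x i - x j) ^ 2
      = 2 * (w i j * (x i * (x i - x j))) + (w i j * x j ^ 2 - w i j * x i ^ 2) := by
    intro i j; ring
  simp only [hterm, sum_add_distrib, sum_sub_distrib, hflow, sub_self, add_zero, ← mul_sum]

theorem dotProduct_diagonal_mul_weightedLaplacian_mulVec {R : Type*} [CommRing R] [DecidableEq ι]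
    (A : Matrix ι ι R) (v x : ι → R) :
    x ⬝ᵥ (diagonal v * weightedLaplacian A) *ᵥ x
      = ∑ i, ∑ j, v i * A i j * (x i * (x i - x j)) := by
  simp only [← mulVec_mulVec, dotProduct, mulVec_diagonal, weightedLaplacian_mulVec_apply, mul_sum]
  exact sum_congr rfl fun i _ => sum_congr rfl fun j _ => by ring

theorem dotProduct_transpose_add_self_mulVec {R : Type*} [CommRing R] (M : Matrix ι ι R)
    (x : ι → R) : x ⬝ᵥ (Mᵀ + M) *ᵥ x = 2 * (x ⬝ᵥ M *ᵥ x) := by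
  rw [add_mulVec, dotProduct_add, mulVec_transpose, dotProduct_comm, ← dotProduct_mulVec,
    two_mul]

theorem sum_mul_sq_sub_eq_zero_iff {w : ι → ι → ℝ} (hw : ∀ i j, 0 ≤ w i j) (x : ι → ℝ) :
    ∑ i, ∑ j, w i j * (x i - x j) ^ 2 = 0 ↔ ∀ i j, 0 < w i j → x i = x j := by
  have hterm : ∀ i j, 0 ≤ w i j * (x i - x j) ^ 2 := fun i j =>
    mul_nonneg (hw i j) (sq_nonneg _)
  simp only [sum_eq_zero_iff_of_nonneg fun i _ => sum_nonneg fun j _ => hterm i j,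
    sum_eq_zero_iff_of_nonneg fun j _ => hterm _ j, mem_univ, true_imp_iff]
  refine forall₂_congr fun i j => ?_
  rw [mul_eq_zero, sq_eq_zero_iff, sub_eq_zero, (hw i j).lt_iff_ne', or_iff_not_imp_left]

end

theorem exists_eq_const_of_transGen {α β : Type*} [Inhabited β] {r : α → α → Prop} {f : α → β}
    (hconn : ∀ a b, a ≠ b → Relation.TransGen r a b) (hf : ∀ a b, r a b → f a = f b) :
    ∃ c, f = fun _ => c := by
  have hpath : ∀ a b, Relation.TransGen r a b → f a = f b := by
    intro a b h
    induction h with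
    | single h => exact hf _ _ h
    | tail _ h ih => exact ih.trans (hf _ _ h)
  rcases isEmpty_or_nonempty α with hα | ⟨⟨a⟩⟩
  · exact ⟨default, funext hα.elim⟩
  · refine ⟨f a, funext fun b => ?_⟩
    rcases eq_or_ne b a with rfl | hba
    · rfl
    · exact hpath b a (hconn b a hba)

theorem laplacian_Q_psd_ker_general {N : ℕ}
    (A : Matrix (Fin N) (Fin N) ℝ)
    (hA_nonneg : ∀ i j, 0 ≤ A i j)
    (hconn : ∀ i j : Fin N, i ≠ j →
      Relation.TransGen (fun p q : Fin N => 0 < A q p) i j)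
    (L : Matrix (Fin N) (Fin N) ℝ)
    (hL : L = Matrix.diagonal (fun i => ∑ j, A i j) - A)
    (v : Fin N → ℝ) (hv_pos : ∀ i, 0 < v i)
    (hv_left : Matrix.vecMul v L = 0)
    (Q : Matrix (Fin N) (Fin N) ℝ)
    (hQ : Q = Lᵀ * Matrix.diagonal v + Matrix.diagonal v * L) :
    Q.IsSymm ∧ Q.PosSemidef ∧
      (∀ x : Fin N → ℝ, Q.mulVec x = 0 ↔ ∃ c : ℝ, x = fun _ => c) := by
  obtain rfl : L = weightedLaplacian A := hL
  replace hQ : Q = (diagonal v * weightedLaplacian A)ᵀ + diagonal v * weightedLaplacian A := by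
    rw [hQ, transpose_mul, diagonal_transpose]
  have hw : ∀ i j, 0 ≤ v i * A i j := fun i j => mul_nonneg (hv_pos i).le (hA_nonneg i j)
  have hquad : ∀ x, x ⬝ᵥ Q *ᵥ x = ∑ i, ∑ j, v i * A i j * (x i - x j) ^ 2 := fun x => by
    rw [hQ, dotProduct_transpose_add_self_mulVec, dotProduct_diagonal_mul_weightedLaplacian_mulVec,
      sum_mul_sq_sub_of_balanced (sum_eq_sum_of_vecMul_weightedLaplacian_eq_zero hv_left)]
  have hsymm : Q.IsSymm := hQ ▸ isSymm_transpose_add_self _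
  have hpsd : Q.PosSemidef := .of_dotProduct_mulVec_nonneg (isHermitian_iff_isSymm.2 hsymm)
    fun x => by rw [star_trivial, hquad]; exact sum_nonneg fun i _ => sum_nonneg fun j _ =>
      mul_nonneg (hw i j) (sq_nonneg _)
  refine ⟨hsymm, hpsd, fun x => ?_⟩
  rw [← hpsd.dotProduct_mulVec_zero_iff, star_trivial, hquad, sum_mul_sq_sub_eq_zero_iff hw]
  constructor
  · exact fun hx => exists_eq_const_of_transGen hconn fun p q hqp =>
      (hx q p (mul_pos (hv_pos q) hqp)).symm
  · rintro ⟨c, rfl⟩ i j _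
    rfl

/-- For the Laplacian `L` of a strongly connected weighted digraph and the positive
normalized left Perron vector `v`, the matrix `Q = LᵀV + VL` (with `V = diag v`) is
symmetric positive semidefinite and its kernel is the span of the all-ones vector. -/
theorem laplacian_Q_psd_ker {N : ℕ} (hN : 0 < N)
    (A : Matrix (Fin N) (Fin N) ℝ)
    (hA_nonneg : ∀ i j, 0 ≤ A i j) (hA_diag : ∀ i, A i i = 0)
    (hconn : ∀ i j : Fin N, i ≠ j →
      Relation.TransGen (fun p q : Fin N => 0 < A q p) i j)
    (L : Matrix (Fin N) (Fin N) ℝ)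
    (hL : L = Matrix.diagonal (fun i => ∑ j, A i j) - A)
    (v : Fin N → ℝ) (hv_pos : ∀ i, 0 < v i)
    (hv_left : Matrix.vecMul v L = 0) (hv_sum : ∑ i, v i = 1)
    (Q : Matrix (Fin N) (Fin N) ℝ)
    (hQ : Q = Lᵀ * Matrix.diagonal v + Matrix.diagonal v * L) :
    Q.IsSymm ∧ Q.PosSemidef ∧
      (∀ x : Fin N → ℝ, Q.mulVec x = 0 ↔ ∃ c : ℝ, x = fun _ => c) :=
  laplacian_Q_psd_ker_general A hA_nonneg hconn L hL v hv_pos hv_left Q hQ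
end

section
/- Let L be the Laplacian of a strongly connected digraph with positive normalized left Perron vector v (vᵀL = 0, vᵀ1 = 1). Suppose the trajectory γ : [0,∞) → ℝ^N satisfies γ̇ = −k_γ L γ + g(t) with |g_i(t)| ≤ 1 for all i and t, where k_γ > 0. Define γ_s := vᵀγ and W(γ) := (γ − 1_N γ_s)ᵀ V (γ − 1_N γ_s) with V = diag(v). Then Ẇ ≤ −(k_γ λ₂(Q)/(2 max_i v_i)) W + 2/(k_γ λ₂(Q)), where Q := LᵀV + VL and λ₂(Q) is its smallest nonzero eigenvalue. -/
open Matrix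

/-!
With `e = γ - (vᵀγ) 1` we have `W = Σ vᵢ eᵢ²` and `Σ vᵢ eᵢ = 0`, so
`Ẇ = 2 Σ vᵢ eᵢ γ̇ᵢ = -k eᵀQe + 2 Σ vᵢ eᵢ gᵢ`. Since `vᵀL = 0`, the quadratic form of `Q` is
`Σᵢⱼ vᵢ aᵢⱼ (eᵢ - eⱼ)²`: it is blind to adding a constant vector, and by strong connectivity its
kernel is `span 1`. Shifting `e` by its plain mean puts it in `1ᗮ = (ker Q)ᗮ`, where `Q ≥ λ₂`; as
the weighted variance is smallest around the weighted mean, this gives `λ₂ W ≤ v_max eᵀQe`.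
Cauchy–Schwarz bounds the forcing term by `√W`, and Young's inequality `2√W ≤ εW + 1/ε` with
`ε = kλ₂ / (2 v_max)`, together with `v_max ≤ 1`, absorbs it.
-/

lemma two_mul_le_mul_sq_add_inv {ε : ℝ} (hε : 0 < ε) (r : ℝ) : 2 * r ≤ ε * r ^ 2 + ε⁻¹ := by
  have : ε * ε⁻¹ = 1 := mul_inv_cancel₀ hε.ne'
  nlinarith [sq_nonneg (ε * r - 1)]

lemma neg_mul_add_two_mul_le {k lam vmax W q G : ℝ} (hk : 0 < k) (hlam : 0 < lam)
    (hvmax : 0 < vmax) (hvmax_le_one : vmax ≤ 1) (hW : 0 ≤ W) (hq : lam * W ≤ vmax * q)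
    (hG : G ≤ √W) : -k * q + 2 * G ≤ -(k * lam / (2 * vmax)) * W + 2 / (k * lam) := by
  have hyoung := two_mul_le_mul_sq_add_inv (ε := k * lam / (2 * vmax)) (by positivity) √W
  rw [Real.sq_sqrt hW, inv_div] at hyoung
  have hconst : 2 * vmax / (k * lam) ≤ 2 / (k * lam) := by gcongr; linarith
  have hdiss : k * lam / vmax * W ≤ k * q := by
    rw [div_mul_eq_mul_div, div_le_iff₀ hvmax]
    nlinarith [mul_le_mul_of_nonneg_left hq hk.le]
  have hhalf : k * lam / vmax * W = 2 * (k * lam / (2 * vmax) * W) := by field_simp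
  linarith

section

variable {ι : Type*} [Fintype ι]

def disagreement (v x : ι → ℝ) : ℝ := ∑ i, v i * (x i - v ⬝ᵥ x) ^ 2

lemma disagreement_nonneg {v : ι → ℝ} (hv : ∀ i, 0 ≤ v i) (x : ι → ℝ) : 0 ≤ disagreement v x :=
  Finset.sum_nonneg fun i _ => mul_nonneg (hv i) (sq_nonneg _)

lemma sum_mul_sub_dotProduct_eq_zero {v : ι → ℝ} (hv : ∑ i, v i = 1) (x : ι → ℝ) :
    ∑ i, v i * (x i - v ⬝ᵥ x) = 0 := by
  simp only [mul_sub, Finset.sum_sub_distrib, ← Finset.sum_mul, hv, one_mul]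
  exact sub_self _

lemma disagreement_le_sum_mul_sq_sub {v : ι → ℝ} (hv : ∑ i, v i = 1) (x : ι → ℝ) (c : ℝ) :
    disagreement v x ≤ ∑ i, v i * (x i - c) ^ 2 := by
  have hsplit : ∑ i, v i * (x i - c) ^ 2
      = disagreement v x + 2 * (v ⬝ᵥ x - c) * ∑ i, v i * (x i - v ⬝ᵥ x)
        + (v ⬝ᵥ x - c) ^ 2 * ∑ i, v i := by
    simp only [disagreement, Finset.mul_sum, ← Finset.sum_add_distrib]
    exact Finset.sum_congr rfl fun i _ => by ring
  rw [hsplit, sum_mul_sub_dotProduct_eq_zero hv, hv]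
  nlinarith [sq_nonneg (v ⬝ᵥ x - c)]

lemma hasDerivAt_disagreement {v : ι → ℝ} (hv : ∑ i, v i = 1) {γ : ℝ → ι → ℝ} {γ' : ι → ℝ}
    {t : ℝ} (hγ : HasDerivAt γ γ' t) :
    HasDerivAt (fun s => disagreement v (γ s)) (2 * ∑ i, v i * (γ t i - v ⬝ᵥ γ t) * γ' i) t := by
  have hcoord (i : ι) : HasDerivAt (fun s => γ s i) (γ' i) t := hasDerivAt_pi.mp hγ i
  have hmean : HasDerivAt (fun s => v ⬝ᵥ γ s) (v ⬝ᵥ γ') t :=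
    HasDerivAt.fun_sum fun i _ => (hcoord i).const_mul (v i)
  refine (HasDerivAt.fun_sum fun i _ =>
    (((hcoord i).sub hmean).pow 2).const_mul (v i)).congr_deriv ?_
  have hcentered := sum_mul_sub_dotProduct_eq_zero hv (γ t)
  calc ∑ i, v i * ((2 : ℕ) * (γ t i - v ⬝ᵥ γ t) ^ (2 - 1) * (γ' i - v ⬝ᵥ γ'))
      = 2 * ∑ i, v i * (γ t i - v ⬝ᵥ γ t) * γ' i
        - 2 * (v ⬝ᵥ γ') * ∑ i, v i * (γ t i - v ⬝ᵥ γ t) := by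
        simp only [Finset.mul_sum, ← Finset.sum_sub_distrib]
        exact Finset.sum_congr rfl fun i _ => by push_cast; ring
    _ = 2 * ∑ i, v i * (γ t i - v ⬝ᵥ γ t) * γ' i := by rw [hcentered]; ring

lemma sum_mul_mul_le_sqrt_disagreement {v g : ι → ℝ} (hv : ∀ i, 0 ≤ v i) (hv_sum : ∑ i, v i = 1)
    (hg : ∀ i, |g i| ≤ 1) (x : ι → ℝ) :
    ∑ i, v i * (x i - v ⬝ᵥ x) * g i ≤ √(disagreement v x) := by
  set e := fun i => x i - v ⬝ᵥ x
  have habs : ∑ i, v i * e i * g i ≤ ∑ i, v i * |e i| := Finset.sum_le_sum fun i _ => by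
    rw [mul_assoc]
    refine mul_le_mul_of_nonneg_left ?_ (hv i)
    calc e i * g i ≤ |e i| * |g i| := (le_abs_self _).trans (abs_mul _ _).le
      _ ≤ |e i| := mul_le_of_le_one_right (abs_nonneg _) (hg i)
  have hcs : (∑ i, v i * |e i|) ^ 2 ≤ disagreement v x := by
    have := Finset.sum_sq_le_sum_mul_sum_of_sq_le_mul Finset.univ
      (fun i _ => hv i) (fun i _ => mul_nonneg (hv i) (sq_nonneg (e i)))
      (fun i _ => (by rw [mul_pow, sq_abs]; ring : (v i * |e i|) ^ 2 = v i * (v i * e i ^ 2)).le)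
    rwa [hv_sum, one_mul] at this
  exact habs.trans (Real.le_sqrt_of_sq_le hcs)

lemma dotProduct_transpose_add_mulVec_self (M : Matrix ι ι ℝ) (x : ι → ℝ) :
    x ⬝ᵥ ((Mᵀ + M) *ᵥ x) = 2 * (x ⬝ᵥ (M *ᵥ x)) := by
  rw [add_mulVec, dotProduct_add, dotProduct_mulVec, vecMul_transpose, dotProduct_comm]
  ring

lemma eq_of_sum_mul_sq_sub_eq_zero {A : Matrix ι ι ℝ} {v x : ι → ℝ} (hA : ∀ i j, 0 ≤ A i j)
    (hconn : ∀ i j, i ≠ j → Relation.TransGen (fun p q => 0 < A q p) i j)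
    (hv : ∀ i, 0 < v i) (hx : ∑ i, ∑ j, v i * A i j * (x i - x j) ^ 2 = 0) (i j : ι) :
    x i = x j := by
  have hnonneg : ∀ i j, 0 ≤ v i * A i j * (x i - x j) ^ 2 := fun i j =>
    mul_nonneg (mul_nonneg (hv i).le (hA i j)) (sq_nonneg _)
  have hterm : ∀ i j, v i * A i j * (x i - x j) ^ 2 = 0 := fun i =>
    congrFun <| (Fintype.sum_eq_zero_iff_of_nonneg (hnonneg i)).mp <|
      congrFun ((Fintype.sum_eq_zero_iff_of_nonneg fun i => Finset.sum_nonneg fun j _ =>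
        hnonneg i j).mp hx) i
  have hedge : ∀ p q, 0 < A q p → x p = x q := fun p q hpq => by
    simpa [(hv q).ne', hpq.ne', sub_eq_zero, eq_comm] using hterm q p
  rcases eq_or_ne i j with rfl | hij
  · rfl
  · simpa [Relation.transGen_eq_self] using (hconn i j hij).lift x hedge

variable [DecidableEq ι]

theorem Matrix.IsHermitian.mul_dotProduct_self_le {Q : Matrix ι ι ℝ} (hQ : Q.IsHermitian)
    {lam : ℝ} (h_min : ∀ (μ : ℝ) (x : ι → ℝ), x ≠ 0 → Q *ᵥ x = μ • x → μ ≠ 0 → lam ≤ μ)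
    {w : ι → ℝ} (hw : ∀ x, Q *ᵥ x = 0 → x ⬝ᵥ w = 0) :
    lam * (w ⬝ᵥ w) ≤ w ⬝ᵥ (Q *ᵥ w) := by
  set b := hQ.eigenvectorBasis
  set μ := hQ.eigenvalues
  have hinner (x y : ι → ℝ) : inner ℝ (WithLp.toLp 2 x) (WithLp.toLp 2 y) = x ⬝ᵥ y := by
    simp [EuclideanSpace.inner_eq_star_dotProduct, dotProduct_comm]
  have hsymm (x : ι → ℝ) : x ⬝ᵥ (Q *ᵥ w) = (Q *ᵥ x) ⬝ᵥ w := by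
    rw [dotProduct_mulVec, ← vecMul_transpose, ← conjTranspose_eq_transpose_of_trivial, hQ.eq]
  have expand (y : ι → ℝ) : w ⬝ᵥ y = ∑ k, (b k ⬝ᵥ w) * (b k ⬝ᵥ y) := by
    rw [← hinner, ← b.sum_inner_mul_inner]
    refine Finset.sum_congr rfl fun k _ => ?_
    rw [real_inner_comm, ← hinner, ← hinner]
  have hterm (k : ι) : lam * (b k ⬝ᵥ w) ^ 2 ≤ μ k * (b k ⬝ᵥ w) ^ 2 := by
    rcases eq_or_ne (b k ⬝ᵥ w) 0 with hc | hc
    · simp [hc]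
    have hμ : μ k ≠ 0 := fun h0 => hc <| hw _ <| by
      rw [hQ.mulVec_eigenvectorBasis, show hQ.eigenvalues k = 0 from h0, zero_smul]
    have hb : (b k : ι → ℝ) ≠ 0 := fun h0 => b.orthonormal.ne_zero k (by ext i; exact congrFun h0 i)
    exact mul_le_mul_of_nonneg_right (h_min _ _ hb (hQ.mulVec_eigenvectorBasis k) hμ) (sq_nonneg _)
  calc lam * (w ⬝ᵥ w) = ∑ k, lam * (b k ⬝ᵥ w) ^ 2 := by
        rw [expand, Finset.mul_sum]; simp only [sq]
    _ ≤ ∑ k, μ k * (b k ⬝ᵥ w) ^ 2 := Finset.sum_le_sum fun k _ => hterm k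
    _ = w ⬝ᵥ (Q *ᵥ w) := by
        rw [expand]
        refine Finset.sum_congr rfl fun k _ => ?_
        rw [hsymm, hQ.mulVec_eigenvectorBasis, smul_dotProduct, smul_eq_mul]
        ring

def laplacian (A : Matrix ι ι ℝ) : Matrix ι ι ℝ := diagonal (fun i => ∑ j, A i j) - A

lemma laplacian_mulVec (A : Matrix ι ι ℝ) (x : ι → ℝ) (i : ι) :
    (laplacian A *ᵥ x) i = ∑ j, A i j * (x i - x j) := by
  rw [laplacian, sub_mulVec, Pi.sub_apply, mulVec_diagonal]
  simp only [mulVec, dotProduct, mul_sub, Finset.sum_sub_distrib, Finset.sum_mul]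

lemma laplacian_mulVec_sub_const (A : Matrix ι ι ℝ) (x : ι → ℝ) (c : ℝ) :
    laplacian A *ᵥ (fun i => x i - c) = laplacian A *ᵥ x := by
  ext i
  simp only [laplacian_mulVec, sub_sub_sub_cancel_right]

lemma sum_mul_apply_eq_of_vecMul_laplacian {A : Matrix ι ι ℝ} {v : ι → ℝ}
    (hv : v ᵥ* laplacian A = 0) (j : ι) : ∑ i, v i * A i j = v j * ∑ k, A j k := by
  have h := congrFun hv j
  simp only [laplacian, vecMul_sub, vecMul_diagonal, Pi.sub_apply, Pi.zero_apply,
    sub_eq_zero] at h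
  exact h.symm

lemma two_mul_dotProduct_diagonal_mul_laplacian_mulVec {A : Matrix ι ι ℝ} {v : ι → ℝ}
    (hv : v ᵥ* laplacian A = 0) (x : ι → ℝ) :
    2 * (x ⬝ᵥ ((diagonal v * laplacian A) *ᵥ x)) = ∑ i, ∑ j, v i * A i j * (x i - x j) ^ 2 := by
  have hsq : ∑ i, ∑ j, v i * A i j * x j ^ 2 = ∑ i, ∑ j, v i * A i j * x i ^ 2 := by
    rw [Finset.sum_comm]
    refine Finset.sum_congr rfl fun j _ => ?_
    rw [← Finset.sum_mul, sum_mul_apply_eq_of_vecMul_laplacian hv, Finset.mul_sum, Finset.sum_mul]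
  have hexp : ∀ i j, v i * A i j * (x i - x j) ^ 2
      = 2 * (v i * A i j * x i * (x i - x j))
        - (v i * A i j * x i ^ 2 - v i * A i j * x j ^ 2) := by
    intro i j; ring
  simp only [hexp, Finset.sum_sub_distrib, hsq, sub_self, sub_zero, ← Finset.mul_sum]
  simp only [dotProduct, ← mulVec_mulVec, mulVec_diagonal, laplacian_mulVec, Finset.mul_sum]
  exact Finset.sum_congr rfl fun i _ => Finset.sum_congr rfl fun j _ => by ring

section Balanced

variable {A Q : Matrix ι ι ℝ} {v : ι → ℝ} (hv : v ᵥ* laplacian A = 0)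
  (hQ : Q = (laplacian A)ᵀ * diagonal v + diagonal v * laplacian A)
include hv hQ

lemma dotProduct_mulVec_eq_sum_mul_sq (x : ι → ℝ) :
    x ⬝ᵥ (Q *ᵥ x) = ∑ i, ∑ j, v i * A i j * (x i - x j) ^ 2 := by
  rw [hQ, ← two_mul_dotProduct_diagonal_mul_laplacian_mulVec hv,
    ← dotProduct_transpose_add_mulVec_self, transpose_mul, diagonal_transpose]

lemma dotProduct_mulVec_sub_const (x : ι → ℝ) (c : ℝ) :
    (fun i => x i - c) ⬝ᵥ (Q *ᵥ fun i => x i - c) = x ⬝ᵥ (Q *ᵥ x) := by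
  simp only [dotProduct_mulVec_eq_sum_mul_sq hv hQ, sub_sub_sub_cancel_right]

lemma two_mul_sum_mul_laplacian_mulVec (x : ι → ℝ) :
    2 * ∑ i, v i * (x i - v ⬝ᵥ x) * (laplacian A *ᵥ x) i = x ⬝ᵥ (Q *ᵥ x) := by
  rw [← dotProduct_mulVec_sub_const hv hQ x (v ⬝ᵥ x), dotProduct_mulVec_eq_sum_mul_sq hv hQ,
    ← two_mul_dotProduct_diagonal_mul_laplacian_mulVec hv, ← mulVec_mulVec,
    laplacian_mulVec_sub_const]
  simp only [dotProduct, mulVec_diagonal]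
  exact congrArg _ (Finset.sum_congr rfl fun i _ => by ring)

lemma dotProduct_eq_zero_of_mulVec_eq_zero (hA : ∀ i j, 0 ≤ A i j)
    (hconn : ∀ i j, i ≠ j → Relation.TransGen (fun p q => 0 < A q p) i j) (hv_pos : ∀ i, 0 < v i)
    {y w : ι → ℝ} (hy : Q *ᵥ y = 0) (hw : ∑ i, w i = 0) : y ⬝ᵥ w = 0 := by
  have hconst := eq_of_sum_mul_sq_sub_eq_zero hA hconn hv_pos
    (by rw [← dotProduct_mulVec_eq_sum_mul_sq hv hQ, hy, dotProduct_zero])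
  rcases isEmpty_or_nonempty ι with hι | ⟨⟨i₀⟩⟩
  · simp [dotProduct]
  calc y ⬝ᵥ w = ∑ i, y i₀ * w i := Finset.sum_congr rfl fun i _ => by rw [hconst i i₀]
    _ = 0 := by rw [← Finset.mul_sum, hw, mul_zero]

lemma hasDerivAt_disagreement_of_hasDerivAt (hv_sum : ∑ i, v i = 1) {k t : ℝ} {γ : ℝ → ι → ℝ}
    {g : ι → ℝ} (hγ : HasDerivAt γ (fun i => -k * (laplacian A *ᵥ γ t) i + g i) t) :
    HasDerivAt (fun s => disagreement v (γ s))
      (-k * (γ t ⬝ᵥ (Q *ᵥ γ t)) + 2 * ∑ i, v i * (γ t i - v ⬝ᵥ γ t) * g i) t := by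
  refine (hasDerivAt_disagreement hv_sum hγ).congr_deriv ?_
  rw [← two_mul_sum_mul_laplacian_mulVec hv hQ]
  simp only [Finset.mul_sum, ← Finset.sum_add_distrib]
  exact Finset.sum_congr rfl fun i _ => by ring

lemma mul_disagreement_le [Nonempty ι] (hA : ∀ i j, 0 ≤ A i j)
    (hconn : ∀ i j, i ≠ j → Relation.TransGen (fun p q => 0 < A q p) i j) (hv_pos : ∀ i, 0 < v i)
    (hv_sum : ∑ i, v i = 1) {vmax : ℝ} (hv_le : ∀ i, v i ≤ vmax) {lam : ℝ} (hlam : 0 ≤ lam)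
    (h_min : ∀ (μ : ℝ) (x : ι → ℝ), x ≠ 0 → Q *ᵥ x = μ • x → μ ≠ 0 → lam ≤ μ) (x : ι → ℝ) :
    lam * disagreement v x ≤ vmax * (x ⬝ᵥ (Q *ᵥ x)) := by
  have hQ_herm : Q.IsHermitian := by
    rw [IsHermitian, conjTranspose_eq_transpose_of_trivial, hQ, transpose_add, transpose_mul,
      transpose_mul, transpose_transpose, diagonal_transpose, add_comm]
  set m := (∑ i, x i) / Fintype.card ι
  set w := fun i => x i - m
  have hw : ∑ i, w i = 0 := by
    rw [Finset.sum_sub_distrib, Finset.sum_const, Finset.card_univ, nsmul_eq_mul,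
      mul_div_cancel₀ _ (Nat.cast_ne_zero.mpr Fintype.card_ne_zero), sub_self]
  have hvmax : 0 ≤ vmax := (hv_pos (Classical.arbitrary ι)).le.trans (hv_le _)
  have hvar : disagreement v x ≤ vmax * (w ⬝ᵥ w) := by
    refine (disagreement_le_sum_mul_sq_sub hv_sum x m).trans ?_
    rw [dotProduct, Finset.mul_sum]
    exact Finset.sum_le_sum fun i _ => by
      rw [← sq]; exact mul_le_mul_of_nonneg_right (hv_le i) (sq_nonneg _)
  calc lam * disagreement v x ≤ lam * (vmax * (w ⬝ᵥ w)) := mul_le_mul_of_nonneg_left hvar hlam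
    _ = vmax * (lam * (w ⬝ᵥ w)) := mul_left_comm _ _ _
    _ ≤ vmax * (w ⬝ᵥ (Q *ᵥ w)) := mul_le_mul_of_nonneg_left
        (hQ_herm.mul_dotProduct_self_le h_min fun y hy =>
          dotProduct_eq_zero_of_mulVec_eq_zero hv hQ hA hconn hv_pos hy hw) hvmax
    _ = vmax * (x ⬝ᵥ (Q *ᵥ x)) := by rw [dotProduct_mulVec_sub_const hv hQ]

end Balanced
end

theorem adaptive_gain_lyapunov_bound_general {N : ℕ}
    (A : Matrix (Fin N) (Fin N) ℝ)
    (hA_nonneg : ∀ i j, 0 ≤ A i j)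
    (hconn : ∀ i j : Fin N, i ≠ j →
      Relation.TransGen (fun p q : Fin N => 0 < A q p) i j)
    (L : Matrix (Fin N) (Fin N) ℝ)
    (hL : L = Matrix.diagonal (fun i => ∑ j, A i j) - A)
    (v : Fin N → ℝ) (hv_pos : ∀ i, 0 < v i)
    (hv_left : Matrix.vecMul v L = 0) (hv_sum : ∑ i, v i = 1)
    (vmax : ℝ) (hvmax : IsGreatest (Set.range v) vmax)
    (Q : Matrix (Fin N) (Fin N) ℝ)
    (hQ : Q = Lᵀ * Matrix.diagonal v + Matrix.diagonal v * L)
    (lam2 : ℝ)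
    (h_pos : 0 < lam2)
    (h_min : ∀ (μ : ℝ) (x : Fin N → ℝ), x ≠ 0 → Q.mulVec x = μ • x → μ ≠ 0 → lam2 ≤ μ)
    (kγ : ℝ) (hkγ : 0 < kγ)
    (g : ℝ → Fin N → ℝ) (hg : ∀ t i, 0 ≤ t → |g t i| ≤ 1)
    (γ : ℝ → Fin N → ℝ)
    (hODE : ∀ t, 0 ≤ t →
      HasDerivAt γ ((fun i => -kγ * (L.mulVec (γ t)) i + g t i) : Fin N → ℝ) t)
    (Wf : (Fin N → ℝ) → ℝ)
    (hWf : ∀ x : Fin N → ℝ,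
      Wf x = ∑ i, v i * (x i - ∑ j, v j * x j) ^ 2) :
    ∀ t, 0 ≤ t →
      deriv (fun s => Wf (γ s)) t ≤
        -(kγ * lam2 / (2 * vmax)) * Wf (γ t) + 2 / (kγ * lam2) := by
  intro t ht
  obtain rfl : L = laplacian A := hL
  obtain rfl : Wf = disagreement v := funext hWf
  obtain ⟨i₀, hi₀⟩ := hvmax.1
  have : Nonempty (Fin N) := ⟨i₀⟩
  have hv_nonneg (i : Fin N) : 0 ≤ v i := (hv_pos i).le
  have hv_le (i : Fin N) : v i ≤ vmax := hvmax.2 ⟨i, rfl⟩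
  have hvmax_le_one : vmax ≤ 1 :=
    hi₀ ▸ hv_sum ▸ Finset.single_le_sum (fun i _ => hv_nonneg i) (Finset.mem_univ i₀)
  rw [(hasDerivAt_disagreement_of_hasDerivAt hv_left hQ hv_sum (hODE t ht)).deriv]
  exact neg_mul_add_two_mul_le hkγ h_pos (hi₀ ▸ hv_pos i₀) hvmax_le_one
    (disagreement_nonneg hv_nonneg (γ t))
    (mul_disagreement_le hv_left hQ hA_nonneg hconn hv_pos hv_sum hv_le h_pos.le h_min (γ t))
    (sum_mul_mul_le_sqrt_disagreement hv_nonneg hv_sum (fun i => hg t i ht) (γ t))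

/-- Lyapunov derivative bound for the adaptive-gain consensus dynamics
`γ̇ = -k_γ L γ + g(t)` with `|g_i| ≤ 1`: along solutions,
`Ẇ ≤ -(k_γ λ₂(Q) / (2 max_i v_i)) W + 2 / (k_γ λ₂(Q))`, where
`W(γ) = (γ - 1 γ_s)ᵀ V (γ - 1 γ_s)`, `γ_s = vᵀγ`, `Q = LᵀV + VL`. -/
theorem adaptive_gain_lyapunov_bound {N : ℕ} (hN : 0 < N)
    (A : Matrix (Fin N) (Fin N) ℝ)
    (hA_nonneg : ∀ i j, 0 ≤ A i j) (hA_diag : ∀ i, A i i = 0)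
    (hconn : ∀ i j : Fin N, i ≠ j →
      Relation.TransGen (fun p q : Fin N => 0 < A q p) i j)
    (L : Matrix (Fin N) (Fin N) ℝ)
    (hL : L = Matrix.diagonal (fun i => ∑ j, A i j) - A)
    (v : Fin N → ℝ) (hv_pos : ∀ i, 0 < v i)
    (hv_left : Matrix.vecMul v L = 0) (hv_sum : ∑ i, v i = 1)
    (vmax : ℝ) (hvmax : IsGreatest (Set.range v) vmax)
    (Q : Matrix (Fin N) (Fin N) ℝ)
    (hQ : Q = Lᵀ * Matrix.diagonal v + Matrix.diagonal v * L)
    (lam2 : ℝ)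
    (h_eig : ∃ x : Fin N → ℝ, x ≠ 0 ∧ Q.mulVec x = lam2 • x)
    (h_pos : 0 < lam2)
    (h_min : ∀ (μ : ℝ) (x : Fin N → ℝ), x ≠ 0 → Q.mulVec x = μ • x → μ ≠ 0 → lam2 ≤ μ)
    (kγ : ℝ) (hkγ : 0 < kγ)
    (g : ℝ → Fin N → ℝ) (hg : ∀ t i, 0 ≤ t → |g t i| ≤ 1)
    (γ : ℝ → Fin N → ℝ)
    (hODE : ∀ t, 0 ≤ t →
      HasDerivAt γ ((fun i => -kγ * (L.mulVec (γ t)) i + g t i) : Fin N → ℝ) t)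
    (Wf : (Fin N → ℝ) → ℝ)
    (hWf : ∀ x : Fin N → ℝ,
      Wf x = ∑ i, v i * (x i - ∑ j, v j * x j) ^ 2) :
    ∀ t, 0 ≤ t →
      deriv (fun s => Wf (γ s)) t ≤
        -(kγ * lam2 / (2 * vmax)) * Wf (γ t) + 2 / (kγ * lam2) :=
  adaptive_gain_lyapunov_bound_general A hA_nonneg hconn L hL v hv_pos hv_left hv_sum vmax hvmax Q
    hQ lam2 h_pos h_min kγ hkγ g hg γ hODE Wf hWf
end
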